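/- The expression Σ_{k+l+m=n} (n!/(k! l! m!)) S_k(d w₁ − 1; χ, ξ^{w₂w₃}) S_l(d w₂ − 1; χ, ξ^{w₁w₃}) S_m(d w₃ − 1; χ, ξ^{w₁w₂}) w₁^{l+m} w₂^{k+m} w₃^{k+l} is invariant under all permutations of (w₁, w₂, w₃), for all nonnegative integers n and positive integers w₁, w₂, w₃ with ξ^{d w₁ w₂ w₃} ≠ 1. -/

import Mathlib

open PowerSeries Finset

/-- `Σ_{a=0}^{d-1} χ(a) ζ^a e^{at}` as a formal power series in `ℂ⟦t⟧`. -/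
noncomputable def twistSum (d : ℕ) (χ : DirichletCharacter ℂ d) (ζ : ℂ) : PowerSeries ℂ :=
  ∑ a ∈ Finset.range d,
    PowerSeries.C (χ (a : ZMod d) * ζ ^ a) * PowerSeries.rescale (a : ℂ) (PowerSeries.exp ℂ)

/-- Generalized twisted Bernoulli polynomial `B_{n,χ,ζ}(x)`, defined by
`(t e^{xt}/(ζ^d e^{dt} − 1)) Σ_{a=0}^{d−1} χ(a) ζ^a e^{at} = Σ_n B_{n,χ,ζ}(x) tⁿ/n!`. -/
noncomputable def genBern (d : ℕ) (χ : DirichletCharacter ℂ d) (ζ : ℂ) (n : ℕ) (x : ℂ) : ℂ :=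
  (n.factorial : ℂ) * PowerSeries.coeff n
    (PowerSeries.X * PowerSeries.rescale x (PowerSeries.exp ℂ) * twistSum d χ ζ *
      (PowerSeries.C (ζ ^ d) * PowerSeries.rescale (d : ℂ) (PowerSeries.exp ℂ) - 1)⁻¹)

/-- Generalized twisted power sum `S_k(m; χ, ζ) = Σ_{a=0}^{m} χ(a) ζ^a a^k` (with `0^0 = 1`). -/
noncomputable def genPowSum (d : ℕ) (χ : DirichletCharacter ℂ d) (ζ : ℂ) (k m : ℕ) : ℂ :=
  ∑ a ∈ Finset.range (m + 1), χ (a : ZMod d) * ζ ^ a * (a : ℂ) ^ k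

/-- The expression of type Λ₂₃³ (equation (34)): a triple multinomial sum of three
generalized twisted power sums. -/
noncomputable def expr14 (d : ℕ) (χ : DirichletCharacter ℂ d) (ξ : ℂ) (n : ℕ)
    (w : Fin 3 → ℕ) : ℂ :=
  ∑ k ∈ Finset.range (n + 1), ∑ l ∈ Finset.range (n + 1 - k),
    (n.factorial : ℂ) / ((k.factorial : ℂ) * (l.factorial : ℂ) * ((n - k - l).factorial : ℂ)) *
      genPowSum d χ (ξ ^ (w 1 * w 2)) k (d * w 0 - 1) *
      genPowSum d χ (ξ ^ (w 0 * w 2)) l (d * w 1 - 1) *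
      genPowSum d χ (ξ ^ (w 0 * w 1)) (n - k - l) (d * w 2 - 1) *
      (w 0 : ℂ) ^ (l + (n - k - l)) * (w 1 : ℂ) ^ (k + (n - k - l)) * (w 2 : ℂ) ^ (k + l)


/-- Rewrite the triangular double sum as a sum over a filtered product. -/
lemma tri_sum (n : ℕ) (f : ℕ → ℕ → ℂ) :
    ∑ k ∈ Finset.range (n + 1), ∑ l ∈ Finset.range (n + 1 - k), f k l
      = ∑ p ∈ (Finset.range (n + 1) ×ˢ Finset.range (n + 1)).filter
          (fun p => p.1 + p.2 ≤ n), f p.1 p.2 := by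
  rw [Finset.sum_filter, Finset.sum_product]
  refine Finset.sum_congr rfl fun k hk => ?_
  rw [Finset.mem_range] at hk
  rw [← Finset.sum_filter]
  refine Finset.sum_congr ?_ fun _ _ => rfl
  ext l
  simp only [Finset.mem_filter, Finset.mem_range]
  omega

lemma expr14_swap01 (d : ℕ) (χ : DirichletCharacter ℂ d) (ξ : ℂ) (n : ℕ) (a b c : ℕ) :
    expr14 d χ ξ n ![a, b, c] = expr14 d χ ξ n ![b, a, c] := by
  unfold expr14
  rw [tri_sum, tri_sum]
  refine Finset.sum_nbij' (fun p => (p.2, p.1)) (fun p => (p.2, p.1)) ?_ ?_ ?_ ?_ ?_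
  · intro p hp; simp only [Finset.mem_filter, Finset.mem_product, Finset.mem_range] at *; omega
  · intro p hp; simp only [Finset.mem_filter, Finset.mem_product, Finset.mem_range] at *; omega
  · intro p _; rfl
  · intro p _; rfl
  · intro p hp
    simp only [Finset.mem_filter, Finset.mem_product, Finset.mem_range] at hp
    obtain ⟨⟨hk, hl⟩, hkl⟩ := hp
    simp only [Matrix.cons_val_zero, Matrix.cons_val_one, Matrix.head_cons,
      Matrix.cons_val_two, Matrix.tail_cons]
    have h1 : n - p.1 - p.2 = n - p.2 - p.1 := by omega
    have h2 : b * c = c * b := Nat.mul_comm b c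
    have h3 : a * c = c * a := Nat.mul_comm a c
    have h4 : a * b = b * a := Nat.mul_comm a b
    rw [h1, h2, h3, h4]
    ring

lemma expr14_swap12 (d : ℕ) (χ : DirichletCharacter ℂ d) (ξ : ℂ) (n : ℕ) (a b c : ℕ) :
    expr14 d χ ξ n ![a, b, c] = expr14 d χ ξ n ![a, c, b] := by
  unfold expr14
  rw [tri_sum, tri_sum]
  refine Finset.sum_nbij' (fun p => (p.1, n - p.1 - p.2)) (fun p => (p.1, n - p.1 - p.2))
    ?_ ?_ ?_ ?_ ?_
  · intro p hp; simp only [Finset.mem_filter, Finset.mem_product, Finset.mem_range] at *; omega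
  · intro p hp; simp only [Finset.mem_filter, Finset.mem_product, Finset.mem_range] at *; omega
  · intro p hp
    simp only [Finset.mem_filter, Finset.mem_product, Finset.mem_range] at hp
    ext <;> simp <;> omega
  · intro p hp
    simp only [Finset.mem_filter, Finset.mem_product, Finset.mem_range] at hp
    ext <;> simp <;> omega
  · intro p hp
    simp only [Finset.mem_filter, Finset.mem_product, Finset.mem_range] at hp
    obtain ⟨⟨hk, hl⟩, hkl⟩ := hp
    simp only [Matrix.cons_val_zero, Matrix.cons_val_one, Matrix.head_cons,
      Matrix.cons_val_two, Matrix.tail_cons]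
    have h1 : n - p.1 - (n - p.1 - p.2) = p.2 := by omega
    have h2 : b * c = c * b := Nat.mul_comm b c
    rw [h1, h2]
    ring

lemma expr14_eq_vec (d : ℕ) (χ : DirichletCharacter ℂ d) (ξ : ℂ) (n : ℕ) (w : Fin 3 → ℕ) :
    expr14 d χ ξ n w = expr14 d χ ξ n ![w 0, w 1, w 2] := by
  congr 1
  funext i
  fin_cases i <;> rfl

lemma expr14_rev (d : ℕ) (χ : DirichletCharacter ℂ d) (ξ : ℂ) (n : ℕ) (a b c : ℕ) :
    expr14 d χ ξ n ![a, b, c] = expr14 d χ ξ n ![c, b, a] := by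
  rw [expr14_swap01, expr14_swap12, expr14_swap01]

lemma expr14_swap (d : ℕ) (χ : DirichletCharacter ℂ d) (ξ : ℂ) (n : ℕ) (w : Fin 3 → ℕ)
    (x y : Fin 3) :
    expr14 d χ ξ n (w ∘ Equiv.swap x y) = expr14 d χ ξ n w := by
  have e01 : w ∘ Equiv.swap (0 : Fin 3) 1 = ![w 1, w 0, w 2] := by
    funext i; fin_cases i <;> simp [Equiv.swap_apply_def]
  have e12 : w ∘ Equiv.swap (1 : Fin 3) 2 = ![w 0, w 2, w 1] := by
    funext i; fin_cases i <;> simp [Equiv.swap_apply_def]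
  have e02 : w ∘ Equiv.swap (0 : Fin 3) 2 = ![w 2, w 1, w 0] := by
    funext i; fin_cases i <;> simp [Equiv.swap_apply_def]
  have hvec := expr14_eq_vec d χ ξ n w
  fin_cases x <;> fin_cases y <;>
    simp only [Fin.isValue, Fin.zero_eta, Fin.mk_one, Fin.reduceFinMk, id_eq]
  · rw [Equiv.swap_self]; simp
  · rw [e01, expr14_swap01, ← hvec]
  · rw [e02, expr14_rev, ← hvec]
  · rw [Equiv.swap_comm, e01, expr14_swap01, ← hvec]
  · rw [Equiv.swap_self]; simp
  · rw [e12, expr14_swap12, ← hvec]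
  · rw [Equiv.swap_comm, e02, expr14_rev, ← hvec]
  · rw [Equiv.swap_comm, e12, expr14_swap12, ← hvec]
  · rw [Equiv.swap_self]; simp

/-- the expression is invariant under all permutations of `(w₁, w₂, w₃)`. -/
theorem stmt14 (d : ℕ) (hd : 0 < d) (χ : DirichletCharacter ℂ d) (hχ : χ.IsPrimitive)
    (ξ : ℂ) (hroot : ∃ m : ℕ, 0 < m ∧ ξ ^ m = 1)
    (n : ℕ) (w : Fin 3 → ℕ) (hw : ∀ i, 0 < w i)
    (h : ξ ^ (d * (w 0 * w 1 * w 2)) ≠ 1) (σ : Equiv.Perm (Fin 3)) :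
    expr14 d χ ξ n (w ∘ σ) = expr14 d χ ξ n w := by
  clear h hw hd hχ hroot
  suffices H : ∀ (σ : Equiv.Perm (Fin 3)) (w : Fin 3 → ℕ),
      expr14 d χ ξ n (w ∘ σ) = expr14 d χ ξ n w from H σ w
  intro σ
  refine Equiv.Perm.swap_induction_on σ (fun w => by simp) ?_
  intro f x y _ ih w
  have hc : w ∘ ⇑(Equiv.swap x y * f) = (w ∘ Equiv.swap x y) ∘ f := rfl
  rw [hc, ih, expr14_swap]
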